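/- Fix integers 3 ≤ l < r, p ∈ (0,1), and ρ ∈ [0,1]. Define α^BSC(ρ,η) = max_{(x₀,x_c,y)∈D(ρ)} [f(x₀,x_c,y,ρ) + k(x₀,x_c,ρ,p) − 2η((1−ρ)x₀ + ρx_c)]. If for η = 0 this maximum is achieved only at the point (x₀,x_c,y) = (0,0,0), then there exists η̃ < 0 such that α^BSC(ρ,η) = 0 for all η > η̃. -/

import Mathlib

open Finset

noncomputable section

/-- Binary entropy in nats, with the convention `0 * log 0 = 0`
(automatic since `Real.log 0 = 0`). -/
def h2 (x : ℝ) : ℝ := -x * Real.log x - (1 - x) * Real.log (1 - x)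

/-- Membership in the domain `D(ρ) ⊆ [0,1]^{2+⌊r/2⌋}`.  The coordinate `y t`
for `t : Fin (r/2)` represents `y_{t+1}`, the fraction of check nodes of
induced degree `2*(t+1)`. -/
def memD (r : ℕ) (ρ x₀ xc : ℝ) (y : Fin (r / 2) → ℝ) : Prop :=
  x₀ ∈ Set.Icc (0 : ℝ) 1 ∧ xc ∈ Set.Icc (0 : ℝ) 1 ∧ (∀ t, y t ∈ Set.Icc (0 : ℝ) 1) ∧
    (∑ t, y t) ≤ 1 ∧
    (∑ t : Fin (r / 2), (2 * ((t : ℕ) + 1) : ℝ) / (r : ℝ) * y t) = (1 - ρ) * x₀ + ρ * xc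

/-- The growth-rate function `f(x₀, x_c, y, ρ)`. -/
def fFun (l r : ℕ) (x₀ xc : ℝ) (y : Fin (r / 2) → ℝ) (ρ : ℝ) : ℝ :=
  -(l : ℝ) * h2 ((1 - ρ) * x₀ + ρ * xc) + (1 - ρ) * h2 x₀ + ρ * h2 xc
    - (l : ℝ) / (r : ℝ) * ((1 - ∑ t, y t) * Real.log (1 - ∑ t, y t))
    - (l : ℝ) / (r : ℝ) * ∑ t, y t * Real.log (y t)
    + (l : ℝ) / (r : ℝ) *
        ∑ t : Fin (r / 2), y t * Real.log (Nat.choose r (2 * ((t : ℕ) + 1)))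

/-- The auxiliary function `k(x₀, x_c, ρ, p) = (ρ x_c - (1-ρ) x₀) ln((1-p)/p)`. -/
def kFun (x₀ xc ρ p : ℝ) : ℝ := (ρ * xc - (1 - ρ) * x₀) * Real.log ((1 - p) / p)

/-- The leading exponent of the loop series for the BSC:
`α^BSC(ρ,η) = max_{(x₀,x_c,y) ∈ D(ρ)} [f + k - 2η((1-ρ)x₀ + ρ x_c)]`,
formalized as a supremum over the (compact) domain `D(ρ)`. -/
def alphaBSC (l r : ℕ) (p ρ η : ℝ) : ℝ :=
  sSup {z : ℝ | ∃ (x₀ xc : ℝ) (y : Fin (r / 2) → ℝ), memD r ρ x₀ xc y ∧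
    z = fFun l r x₀ xc y ρ + kFun x₀ xc ρ p - 2 * η * ((1 - ρ) * x₀ + ρ * xc)}

/-!
Write `s = (1-ρ)x₀ + ρx_c`. Gibbs' inequality, applied with the reference values `s` for
`x₀, x_c` and `s^(t+1)` for `y_t` (the constraint of `D(ρ)` says `∑ (t+1) y_t = r s / 2`),
gives `f + k ≤ s ((l/2 - 1) log s + C)` on `D(ρ)`. Since `l ≥ 3` the logarithm wins, so
`f + k ≤ -s` for small `s > 0`; on the compact part `s ≥ δ` of `D(ρ)` the strict maximality
at the origin gives `f + k ≤ -c`. Hence `f + k ≤ -κ s` on `D(ρ)` for some `κ > 0`, and the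
term `-2ηs` keeps the objective nonpositive as long as `η > -κ/2`.
-/

open Real

lemma neg_mul_log_le_neg_mul_log_add_sub {x q : ℝ} (hx : 0 ≤ x) (hq : 0 < q) :
    -(x * log x) ≤ -(x * log q) + q - x := by
  rcases hx.eq_or_lt with rfl | hx
  · simpa using hq.le
  have hlog := log_le_sub_one_of_pos (div_pos hq hx)
  rw [log_div hq.ne' hx.ne'] at hlog
  have : x * (log q - log x) ≤ q - x := by
    calc x * (log q - log x) ≤ x * (q / x - 1) := mul_le_mul_of_nonneg_left hlog hx.le
      _ = q - x := by field_simp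
  linarith

lemma neg_one_sub_mul_log_one_sub_le {x : ℝ} (hx : x ≤ 1) : -((1 - x) * log (1 - x)) ≤ x := by
  have := negMulLog_le_one_sub_self (sub_nonneg.2 hx)
  rw [negMulLog_eq_neg] at this
  linarith

lemma neg_mul_log_le_h2 {x : ℝ} (h0 : 0 ≤ x) (h1 : x ≤ 1) : -(x * log x) ≤ h2 x := by
  have := mul_log_nonpos (sub_nonneg.2 h1) (by linarith : 1 - x ≤ 1)
  unfold h2; linarith

lemma h2_le_neg_mul_log_add {x q : ℝ} (h0 : 0 ≤ x) (h1 : x ≤ 1) (hq : 0 < q) :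
    h2 x ≤ -(x * log q) + q := by
  have := neg_mul_log_le_neg_mul_log_add_sub h0 hq
  have := neg_one_sub_mul_log_one_sub_le h1
  unfold h2; linarith

lemma h2_eq_binEntropy : h2 = binEntropy := by
  ext x; simp only [h2, binEntropy, log_inv]; ring

lemma neg_sum_mul_log_le {ι : Type*} [Fintype ι] {y : ι → ℝ} {w : ι → ℕ} {s : ℝ}
    (hy : ∀ i, 0 ≤ y i) (hw : ∀ i, 1 ≤ w i) (hs0 : 0 < s) (hs1 : s ≤ 1) :
    -∑ i, y i * log (y i) ≤ -((∑ i, (w i : ℝ) * y i) * log s) + Fintype.card ι * s := by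
  have hterm : ∀ i, -(y i * log (y i)) ≤ -((w i : ℝ) * y i * log s) + s := by
    intro i
    have h := neg_mul_log_le_neg_mul_log_add_sub (hy i) (pow_pos hs0 (w i))
    rw [log_pow] at h
    have : s ^ w i ≤ s := pow_le_of_le_one hs0.le hs1 (by have := hw i; omega)
    linarith [hy i]
  calc -∑ i, y i * log (y i) = ∑ i, -(y i * log (y i)) := by rw [sum_neg_distrib]
    _ ≤ ∑ i, (-((w i : ℝ) * y i * log s) + s) := sum_le_sum fun i _ => hterm i
    _ = _ := by rw [sum_add_distrib, sum_neg_distrib, ← sum_mul]; simp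

lemma log_choose_le (n k : ℕ) : log (n.choose k) ≤ n * log 2 := by
  rcases (n.choose k).eq_zero_or_pos with h | h
  · rw [h, Nat.cast_zero, log_zero]; positivity
  rw [← log_pow]
  exact log_le_log (by exact_mod_cast h) (by exact_mod_cast n.choose_le_two_pow k)

lemma isCompact_setOf_memD (r : ℕ) (ρ : ℝ) :
    IsCompact {q : ℝ × ℝ × (Fin (r / 2) → ℝ) | memD r ρ q.1 q.2.1 q.2.2} := by
  have hbox : IsCompact (Set.Icc (0 : ℝ) 1 ×ˢ Set.Icc (0 : ℝ) 1 ×ˢ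
      Set.univ.pi fun _ : Fin (r / 2) => Set.Icc (0 : ℝ) 1) :=
    isCompact_Icc.prod (isCompact_Icc.prod (isCompact_univ_pi fun _ => isCompact_Icc))
  refine hbox.of_isClosed_subset ?_ fun q hq => ⟨hq.1, hq.2.1, fun t _ => hq.2.2.1 t⟩
  simp only [memD, Set.mem_Icc, Set.ofPred_and, Set.ofPred_forall]
  repeat' first
    | apply IsClosed.inter
    | (apply isClosed_iInter; intro)
    | (apply isClosed_le <;> fun_prop)
    | (apply isClosed_eq <;> fun_prop)

def fkFun (l r : ℕ) (p ρ x₀ xc : ℝ) (y : Fin (r / 2) → ℝ) : ℝ :=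
  fFun l r x₀ xc y ρ + kFun x₀ xc ρ p

lemma continuous_fkFun (l r : ℕ) (p ρ : ℝ) :
    Continuous fun q : ℝ × ℝ × (Fin (r / 2) → ℝ) => fkFun l r p ρ q.1 q.2.1 q.2.2 := by
  simp only [fkFun, fFun, kFun, h2_eq_binEntropy]
  have := continuous_mul_log
  fun_prop

lemma fkFun_zero (l r : ℕ) (p ρ : ℝ) : fkFun l r p ρ 0 0 0 = 0 := by
  simp [fkFun, fFun, kFun, h2]

lemma memD_zero (r : ℕ) (ρ : ℝ) : memD r ρ 0 0 0 := by
  refine ⟨?_, ?_, fun _ => ?_, ?_, ?_⟩ <;> simp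

section memD

variable {r : ℕ} {ρ x₀ xc : ℝ} {y : Fin (r / 2) → ℝ}

lemma weight_mem_Icc_of_memD (hρ : ρ ∈ Set.Icc (0 : ℝ) 1) (hD : memD r ρ x₀ xc y) :
    (1 - ρ) * x₀ + ρ * xc ∈ Set.Icc (0 : ℝ) 1 := by
  obtain ⟨hρ0, hρ1⟩ := hρ
  obtain ⟨⟨hx0, hx1⟩, ⟨hc0, hc1⟩, -⟩ := hD
  constructor <;> nlinarith

lemma sum_succ_mul_eq_of_memD (hr : r ≠ 0) (hD : memD r ρ x₀ xc y) :
    ∑ t : Fin (r / 2), ((t + 1 : ℕ) : ℝ) * y t = r / 2 * ((1 - ρ) * x₀ + ρ * xc) := by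
  rw [← hD.2.2.2.2, mul_sum]
  refine sum_congr rfl fun t _ => ?_
  field_simp
  push_cast
  ring

lemma entropy_y_add_log_choose_le (hr : r ≠ 0) (hρ : ρ ∈ Set.Icc (0 : ℝ) 1)
    (hD : memD r ρ x₀ xc y) (hs : 0 < (1 - ρ) * x₀ + ρ * xc) :
    -((1 - ∑ t, y t) * log (1 - ∑ t, y t)) - ∑ t, y t * log (y t)
        + ∑ t : Fin (r / 2), y t * log (Nat.choose r (2 * ((t : ℕ) + 1))) ≤
      r / 2 * ((1 - ρ) * x₀ + ρ * xc) * (2 + r * log 2 - log ((1 - ρ) * x₀ + ρ * xc)) := by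
  set s := (1 - ρ) * x₀ + ρ * xc
  have hy t : 0 ≤ y t := (hD.2.2.1 t).1
  have hweight := sum_succ_mul_eq_of_memD hr hD
  have hmass : ∑ t, y t ≤ r / 2 * s := by
    rw [← hweight]
    refine sum_le_sum fun t _ => le_mul_of_one_le_left (hy t) ?_
    exact_mod_cast Nat.le_add_left 1 t
  have hrest := neg_one_sub_mul_log_one_sub_le hD.2.2.2.1
  have hent := neg_sum_mul_log_le hy (fun t => Nat.le_add_left 1 t) hs
    (weight_mem_Icc_of_memD hρ hD).2
  have hcard : ((r / 2 : ℕ) : ℝ) ≤ r / 2 := Nat.cast_div_le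
  have hchoose : ∑ t : Fin (r / 2), y t * log (Nat.choose r (2 * ((t : ℕ) + 1))) ≤
      (∑ t, y t) * (r * log 2) := by
    rw [sum_mul]
    exact sum_le_sum fun t _ => mul_le_mul_of_nonneg_left (log_choose_le _ _) (hy t)
  rw [hweight, Fintype.card_fin] at hent
  have : (∑ t, y t) * (r * log 2) ≤ r / 2 * s * (r * log 2) :=
    mul_le_mul_of_nonneg_right hmass (by positivity)
  nlinarith

def objConst (l r : ℕ) (p : ℝ) : ℝ := 1 + l + l * r / 2 * log 2 + |log ((1 - p) / p)|

lemma kFun_le (hρ : ρ ∈ Set.Icc (0 : ℝ) 1) (hx₀ : 0 ≤ x₀) (hxc : 0 ≤ xc) (p : ℝ) :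
    kFun x₀ xc ρ p ≤ |log ((1 - p) / p)| * ((1 - ρ) * x₀ + ρ * xc) := by
  have h0 : 0 ≤ (1 - ρ) * x₀ := mul_nonneg (by linarith [hρ.2]) hx₀
  have h1 : 0 ≤ ρ * xc := mul_nonneg hρ.1 hxc
  calc kFun x₀ xc ρ p ≤ |ρ * xc - (1 - ρ) * x₀| * |log ((1 - p) / p)| :=
        (le_abs_self _).trans_eq (abs_mul _ _)
    _ ≤ ((1 - ρ) * x₀ + ρ * xc) * |log ((1 - p) / p)| :=
        mul_le_mul_of_nonneg_right (abs_le.2 ⟨by linarith, by linarith⟩) (abs_nonneg _)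
    _ = _ := mul_comm _ _

lemma fkFun_le_weight_mul (l : ℕ) (p : ℝ) (hr : r ≠ 0) (hρ : ρ ∈ Set.Icc (0 : ℝ) 1)
    (hD : memD r ρ x₀ xc y) (hs : 0 < (1 - ρ) * x₀ + ρ * xc) :
    fkFun l r p ρ x₀ xc y ≤ ((1 - ρ) * x₀ + ρ * xc) *
      ((l / 2 - 1) * log ((1 - ρ) * x₀ + ρ * xc) + objConst l r p) := by
  have hx₀ := hD.1
  have hxc := hD.2.1
  have hs1 := (weight_mem_Icc_of_memD hρ hD).2
  set s := (1 - ρ) * x₀ + ρ * xc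
  have hvar : -(l : ℝ) * h2 s ≤ l * (s * log s) := by
    have := neg_mul_log_le_h2 hs.le hs1
    nlinarith [(Nat.cast_nonneg l : (0 : ℝ) ≤ l)]
  have hvert : (1 - ρ) * h2 x₀ + ρ * h2 xc ≤ -(s * log s) + s := by
    have h0 := mul_le_mul_of_nonneg_left (h2_le_neg_mul_log_add hx₀.1 hx₀.2 hs)
      (sub_nonneg.2 hρ.2)
    have h1 := mul_le_mul_of_nonneg_left (h2_le_neg_mul_log_add hxc.1 hxc.2 hs) hρ.1
    linarith
  have hcheck := mul_le_mul_of_nonneg_left (entropy_y_add_log_choose_le hr hρ hD hs)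
    (by positivity : (0 : ℝ) ≤ l / r)
  have hk := kFun_le hρ hx₀.1 hxc.1 p
  have hr' : (r : ℝ) ≠ 0 := by exact_mod_cast hr
  have hlr : (l : ℝ) / r * (r / 2 * s * (2 + r * log 2 - log s)) =
      l * s - l / 2 * (s * log s) + l * r / 2 * log 2 * s := by
    field_simp
    ring
  have hexpand : fkFun l r p ρ x₀ xc y = -(l : ℝ) * h2 s + ((1 - ρ) * h2 x₀ + ρ * h2 xc) +
      l / r * (-((1 - ∑ t, y t) * log (1 - ∑ t, y t)) - ∑ t, y t * log (y t)
        + ∑ t : Fin (r / 2), y t * log (Nat.choose r (2 * ((t : ℕ) + 1))))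
      + kFun x₀ xc ρ p := by
    simp only [fkFun, fFun]
    ring
  rw [hexpand, objConst]
  nlinarith

lemma fkFun_le_neg_weight {l : ℕ} (hl : 3 ≤ l) (p : ℝ) (hr : r ≠ 0)
    (hρ : ρ ∈ Set.Icc (0 : ℝ) 1) (hD : memD r ρ x₀ xc y)
    (hs : 0 < (1 - ρ) * x₀ + ρ * xc)
    (hsmall : (1 - ρ) * x₀ + ρ * xc ≤ exp (-2 * (objConst l r p + 1))) :
    fkFun l r p ρ x₀ xc y ≤ -((1 - ρ) * x₀ + ρ * xc) := by
  set s := (1 - ρ) * x₀ + ρ * xc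
  have hlog : log s ≤ -2 * (objConst l r p + 1) := (log_le_log hs hsmall).trans_eq (log_exp _)
  have hlog0 : log s ≤ 0 := log_nonpos hs.le (weight_mem_Icc_of_memD hρ hD).2
  have hl' : (3 : ℝ) ≤ l := by exact_mod_cast hl
  have hbracket : (l / 2 - 1) * log s + objConst l r p ≤ -1 := by nlinarith
  calc fkFun l r p ρ x₀ xc y ≤ s * ((l / 2 - 1) * log s + objConst l r p) :=
        fkFun_le_weight_mul l p hr hρ hD hs
    _ ≤ s * (-1) := mul_le_mul_of_nonneg_left hbracket hs.le
    _ = -s := mul_neg_one s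

end memD

section hmax

variable {l r : ℕ} {p ρ : ℝ}
  (hmax : ∀ (x₀ xc : ℝ) (y : Fin (r / 2) → ℝ), memD r ρ x₀ xc y →
    ¬(x₀ = 0 ∧ xc = 0 ∧ y = 0) → fkFun l r p ρ x₀ xc y < 0)
include hmax

lemma exists_fkFun_le_neg_of_le_weight {ε : ℝ} (hε : 0 < ε) :
    ∃ c > 0, ∀ (x₀ xc : ℝ) (y : Fin (r / 2) → ℝ), memD r ρ x₀ xc y →
      ε ≤ (1 - ρ) * x₀ + ρ * xc → fkFun l r p ρ x₀ xc y ≤ -c := by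
  have hK : IsCompact {q : ℝ × ℝ × (Fin (r / 2) → ℝ) |
      memD r ρ q.1 q.2.1 q.2.2 ∧ ε ≤ (1 - ρ) * q.1 + ρ * q.2.1} :=
    (isCompact_setOf_memD r ρ).inter_right <| isClosed_le continuous_const <|
      (continuous_const.mul continuous_fst).add (continuous_const.mul continuous_snd.fst)
  obtain ⟨c, hc, hle⟩ := hK.exists_forall_le' (continuous_fkFun l r p ρ).neg.continuousOn
    (a := 0) <| by
      rintro ⟨x₀, xc, y⟩ ⟨hD, hεs⟩
      refine neg_pos.2 (hmax x₀ xc y hD ?_)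
      rintro ⟨rfl, rfl, -⟩
      simp only [mul_zero, add_zero] at hεs
      linarith
  exact ⟨c, hc, fun x₀ xc y hD hεs => le_neg.2 (hle (x₀, xc, y) ⟨hD, hεs⟩)⟩

lemma exists_fkFun_le_neg_mul_weight (hl : 3 ≤ l) (hr : r ≠ 0)
    (hρ : ρ ∈ Set.Icc (0 : ℝ) 1) :
    ∃ κ > 0, ∀ (x₀ xc : ℝ) (y : Fin (r / 2) → ℝ), memD r ρ x₀ xc y →
      fkFun l r p ρ x₀ xc y ≤ -(κ * ((1 - ρ) * x₀ + ρ * xc)) := by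
  obtain ⟨c, hc, hfar⟩ :=
    exists_fkFun_le_neg_of_le_weight hmax (exp_pos (-2 * (objConst l r p + 1)))
  refine ⟨min 1 c, lt_min one_pos hc, fun x₀ xc y hD => ?_⟩
  obtain ⟨hs0, hs1⟩ := weight_mem_Icc_of_memD hρ hD
  have hκ1 := min_le_left 1 c
  have hκc := min_le_right 1 c
  rcases hs0.eq_or_lt with hs | hs
  · rw [← hs, mul_zero, neg_zero]
    by_cases h0 : x₀ = 0 ∧ xc = 0 ∧ y = 0
    · obtain ⟨rfl, rfl, rfl⟩ := h0
      exact (fkFun_zero l r p ρ).le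
    · exact (hmax x₀ xc y hD h0).le
  rcases le_total ((1 - ρ) * x₀ + ρ * xc) (exp (-2 * (objConst l r p + 1)))
    with hnear | hfar'
  · have := fkFun_le_neg_weight hl p hr hρ hD hs hnear
    nlinarith
  · have := hfar x₀ xc y hD hfar'
    nlinarith

end hmax

theorem alphaBSC_eq_zero_near_zero_general (l r : ℕ) (hl : 3 ≤ l) (hlr : l < r)
    (p : ℝ) (ρ : ℝ) (hρ : ρ ∈ Set.Icc (0 : ℝ) 1)
    (hmax : ∀ (x₀ xc : ℝ) (y : Fin (r / 2) → ℝ), memD r ρ x₀ xc y →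
      ¬(x₀ = 0 ∧ xc = 0 ∧ y = 0) →
      fFun l r x₀ xc y ρ + kFun x₀ xc ρ p < fFun l r 0 0 0 ρ + kFun 0 0 ρ p) :
    ∃ ηt : ℝ, ηt < 0 ∧ ∀ η : ℝ, ηt < η → alphaBSC l r p ρ η = 0 := by
  have hmax' x₀ xc y hD hne : fkFun l r p ρ x₀ xc y < 0 :=
    (hmax x₀ xc y hD hne).trans_eq (fkFun_zero l r p ρ)
  obtain ⟨κ, hκ, hdecay⟩ := exists_fkFun_le_neg_mul_weight hmax' hl (by omega) hρ
  refine ⟨-(κ / 2), by linarith, fun η hη =>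
    IsGreatest.csSup_eq ⟨⟨0, 0, 0, memD_zero r ρ, ?_⟩, ?_⟩⟩
  · simp only [mul_zero, add_zero, sub_zero]
    exact (fkFun_zero l r p ρ).symm
  · rintro z ⟨x₀, xc, y, hD, rfl⟩
    have hF : fFun l r x₀ xc y ρ + kFun x₀ xc ρ p ≤ -(κ * ((1 - ρ) * x₀ + ρ * xc)) :=
      hdecay x₀ xc y hD
    have hs := (weight_mem_Icc_of_memD hρ hD).1
    nlinarith

/-- **Lemma 1 (BSC case).**  If for `η = 0` the maximum of the loop-series
exponent over `D(ρ)` is achieved only at `(x₀, x_c, y) = (0,0,0)`, then there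
exists `η̃ < 0` such that `α^BSC(ρ,η) = 0` for all `η > η̃`. -/
theorem alphaBSC_eq_zero_near_zero (l r : ℕ) (hl : 3 ≤ l) (hlr : l < r)
    (p : ℝ) (hp : p ∈ Set.Ioo (0 : ℝ) 1) (ρ : ℝ) (hρ : ρ ∈ Set.Icc (0 : ℝ) 1)
    (hmax : ∀ (x₀ xc : ℝ) (y : Fin (r / 2) → ℝ), memD r ρ x₀ xc y →
      ¬(x₀ = 0 ∧ xc = 0 ∧ y = 0) →
      fFun l r x₀ xc y ρ + kFun x₀ xc ρ p < fFun l r 0 0 0 ρ + kFun 0 0 ρ p) :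
    ∃ ηt : ℝ, ηt < 0 ∧ ∀ η : ℝ, ηt < η → alphaBSC l r p ρ η = 0 :=
  alphaBSC_eq_zero_near_zero_general l r hl hlr p ρ hρ hmax
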